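/- arXiv:1606.03791 — 4 statements merged into one kernel-verified Lean document; each statement's English description precedes it below -/
import Mathlib

section
/- Let M be a positive integer and q ∈ (1, M+1]. If for every r ∈ (q, M+1] the Hausdorff dimension of U ∩ (q, r) is strictly positive, then q ∈ U, i.e., 1 has a unique q-expansion. In fact, the paper proves the contrapositive in the stronger form: if q ∉ U then U ∩ (q, r) = ∅ for some r ∈ (q, M+1]. -/
open Set MeasureTheory Filter

noncomputable section

/-- The projection `π_q` of a digit sequence (0-indexed): `∑ d i / q^(i+1)`. -/
def piQ (q : ℝ) (d : ℕ → ℕ) : ℝ := ∑' i : ℕ, (d i : ℝ) / q ^ (i + 1)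

/-- `d` is a `q`-expansion of `x` over the alphabet `{0,…,M}`. -/
def IsExpansion (M : ℕ) (q x : ℝ) (d : ℕ → ℕ) : Prop :=
  (∀ i, d i ≤ M) ∧ piQ q d = x

/-- `U'_q`: digit sequences that are the unique `q`-expansion of their projection. -/
def UnivSeqs (M : ℕ) (q : ℝ) : Set (ℕ → ℕ) :=
  {d | (∀ i, d i ≤ M) ∧ ∀ e : ℕ → ℕ, IsExpansion M q (piQ q d) e → e = d}

/-- The set `U = U(M)` of univoque bases: `q ∈ (1, M+1]` such that `1` has a
unique `q`-expansion over `{0,…,M}`. -/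
def UnivBases (M : ℕ) : Set ℝ :=
  {q | 1 < q ∧ q ≤ M + 1 ∧ ∃! d : ℕ → ℕ, IsExpansion M q 1 d}

/-- The Komornik–Loreti constant `q'(M) = min U(M)`. -/
def KL (M : ℕ) : ℝ := sInf (UnivBases M)

/-- `(a, b)` is a connected component of `(q'(M), M+1) \ closure (U(M))`:
an open subinterval whose endpoints do not lie in that (open) set. -/
def CC (M : ℕ) (a b : ℝ) : Prop :=
  a < b ∧ Ioo a b ⊆ Ioo (KL M) (M + 1) \ closure (UnivBases M) ∧
    a ∉ Ioo (KL M) (M + 1) \ closure (UnivBases M) ∧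
    b ∉ Ioo (KL M) (M + 1) \ closure (UnivBases M)

/-- `x ∈ [0, M/(q-1)]` has exactly two distinct `q`-expansions. -/
def HasExactlyTwoExpansions (M : ℕ) (q x : ℝ) : Prop :=
  ∃ c d : ℕ → ℕ, c ≠ d ∧ IsExpansion M q x c ∧ IsExpansion M q x d ∧
    ∀ e : ℕ → ℕ, IsExpansion M q x e → e = c ∨ e = d

/-- `B_2(M)`: bases `q ∈ (1, M+1]` for which some `x ∈ [0, M/(q-1)]` has exactly
two `q`-expansions. -/
def B2 (M : ℕ) : Set ℝ :=
  {q | 1 < q ∧ q ≤ M + 1 ∧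
    ∃ x ∈ Icc (0 : ℝ) (M / (q - 1)), HasExactlyTwoExpansions M q x}

/-- Strict lexicographic order on digit sequences. -/
def seqLt (a b : ℕ → ℕ) : Prop := ∃ n, (∀ i < n, a i = b i) ∧ a n < b n

/-- Lexicographic order on digit sequences. -/
def seqLe (a b : ℕ → ℕ) : Prop := seqLt a b ∨ a = b

/-- A digit sequence is infinite if it does not end with `0^∞` after a last
nonzero digit (in particular `0^∞` is infinite). -/
def IsInfiniteSeq (a : ℕ → ℕ) : Prop := ¬∃ m, a m ≠ 0 ∧ ∀ i > m, a i = 0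

/-- `a = α(q)`, the quasi-greedy `q`-expansion of `1`: the lexicographically
largest infinite `q`-expansion of `1`. -/
def IsQuasiGreedy (M : ℕ) (q : ℝ) (a : ℕ → ℕ) : Prop :=
  IsExpansion M q 1 a ∧ IsInfiniteSeq a ∧
    ∀ b : ℕ → ℕ, IsExpansion M q 1 b → IsInfiniteSeq b → seqLe b a

/-- `b = β(q)`, the greedy `q`-expansion of `1`: the lexicographically largest
`q`-expansion of `1`. -/
def IsGreedy (M : ℕ) (q : ℝ) (b : ℕ → ℕ) : Prop :=
  IsExpansion M q 1 b ∧ ∀ c : ℕ → ℕ, IsExpansion M q 1 c → seqLe c b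

/-- `w⁺`: increase the last digit of a word by one. -/
def plusWord : List ℕ → List ℕ
  | [] => []
  | [a] => [a + 1]
  | a :: b :: rest => a :: plusWord (b :: rest)

/-- `w⁻`: decrease the last digit of a word by one. -/
def minusWord : List ℕ → List ℕ
  | [] => []
  | [a] => [a - 1]
  | a :: b :: rest => a :: minusWord (b :: rest)

/-- The reflection of a word: `\overline{w} = (M - w_1) ⋯ (M - w_k)`. -/
def reflWord (M : ℕ) (w : List ℕ) : List ℕ := w.map fun a => M - a

/-- The substitution `g(w) = w⁺ \overline{w⁺}`. -/
def gWord (M : ℕ) (w : List ℕ) : List ℕ := plusWord w ++ reflWord M (plusWord w)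

/-- The periodic sequence `t^∞` determined by a word `t`. -/
def periodicSeq (t : List ℕ) (i : ℕ) : ℕ := t.getD (i % t.length) 0

/-- Strict lexicographic order on words. -/
def wordLt (u v : List ℕ) : Prop := List.Lex (· < ·) u v

/-- Lexicographic order on words. -/
def wordLe (u v : List ℕ) : Prop := wordLt u v ∨ u = v

/-- The connected component `(q_0, q_0^*)` of `(q'(M), M+1) \ closure (U(M))` is
generated by the word `t`, and `θ = α(q_0^*)`: `α(q_0) = t^∞` and
`α(q_0^*) = lim_{n→∞} g^n(t)`, i.e. every `g^n(t)` is a prefix of `θ`. -/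
def GeneratedBy (M : ℕ) (q₀ q₀star : ℝ) (t : List ℕ) (θ : ℕ → ℕ) : Prop :=
  CC M q₀ q₀star ∧ t ≠ [] ∧ IsQuasiGreedy M q₀ (periodicSeq t) ∧
    IsQuasiGreedy M q₀star θ ∧
    ∀ n : ℕ, ∀ i < ((gWord M)^[n] t).length, ((gWord M)^[n] t).getD i 0 = θ i

/-!
If `1` has two `q`-expansions `c < c'`, look at their first difference `k`. Either the tail of
`c` after `k` stays strictly below the maximal value `M / (q - 1)`, so that both digits `c k` and
`c' k` can be continued after the common prefix with room to spare, or that tail is maximal. In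
the second case `c₀ ⋯ c_{k-1} (c_k + 1)` followed by the reflection of `c` is another expansion
of `1`, in which a positive digit is followed by zeros, and lowering that digit leaves room to
spare. The room to spare is a strict inequality between continuous functions of the base, so it
persists on some `(q, r)`, and for every base there it produces two expansions of `1`.
-/

open Topology

namespace Univoque

variable {M : ℕ} {q : ℝ} {d : ℕ → ℕ}

lemma summable_digits (hq : 1 < q) (hd : ∀ i, d i ≤ M) :
    Summable (fun i => (d i : ℝ) / q ^ (i + 1)) := by
  have hq0 : 0 < q := one_pos.trans hq
  refine Summable.of_nonneg_of_le (fun i => by positivity) (fun i => ?_)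
    ((summable_geometric_of_lt_one (by positivity) ((div_lt_one hq0).2 hq)).mul_left ((M : ℝ) / q))
  rw [one_div_pow, ← div_eq_mul_one_div, div_div, ← pow_succ']
  gcongr
  exact_mod_cast hd i

lemma piQ_const (hq : 1 < q) (a : ℕ) : piQ q (fun _ => a) = a / (q - 1) := by
  have hq0 : 0 < q := one_pos.trans hq
  have hterm : ∀ i : ℕ, (a : ℝ) / q ^ (i + 1) = a / q * (1 / q) ^ i := fun i => by
    rw [one_div_pow, ← div_eq_mul_one_div, div_div, ← pow_succ']
  simp only [piQ, hterm]
  rw [tsum_mul_left, tsum_geometric_of_lt_one (by positivity) ((div_lt_one hq0).2 hq)]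
  have : q - 1 ≠ 0 := by linarith
  field_simp

lemma piQ_nonneg (hq : 0 ≤ q) : 0 ≤ piQ q d :=
  tsum_nonneg fun _ => by positivity

lemma piQ_le (hq : 1 < q) (hd : ∀ i, d i ≤ M) : piQ q d ≤ M / (q - 1) := by
  rw [← piQ_const hq]
  refine (summable_digits hq hd).tsum_le_tsum (fun i => ?_) (summable_digits hq fun _ => le_rfl)
  gcongr
  exact_mod_cast hd i

lemma piQ_eq_sum_add_piQ_shift (hq : 1 < q) (hd : ∀ i, d i ≤ M) (m : ℕ) :
    piQ q d = ∑ i ∈ Finset.range m, (d i : ℝ) / q ^ (i + 1)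
      + piQ q (fun i => d (i + m)) / q ^ m := by
  have hterm : ∀ i : ℕ, (d (i + m) : ℝ) / q ^ (i + m + 1) = d (i + m) / q ^ (i + 1) / q ^ m :=
    fun i => by rw [div_div, ← pow_add, add_right_comm]
  rw [piQ, ← (summable_digits hq hd).sum_add_tsum_nat_add m, piQ, ← tsum_div_const]
  simp only [hterm]

lemma piQ_reflect (hq : 1 < q) (hd : ∀ i, d i ≤ M) :
    piQ q (fun i => M - d i) = M / (q - 1) - piQ q d := by
  have hterm : ∀ i : ℕ, ((M - d i : ℕ) : ℝ) / q ^ (i + 1) = M / q ^ (i + 1) - d i / q ^ (i + 1) :=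
    fun i => by rw [Nat.cast_sub (hd i), sub_div]
  simp only [piQ, hterm]
  rw [(summable_digits hq fun _ => le_rfl).tsum_sub (summable_digits hq hd), ← piQ, ← piQ,
    piQ_const hq]

section Prefixes

variable {v t : ℕ → ℕ} {n a : ℕ}

def splice (v : ℕ → ℕ) (n a : ℕ) (t : ℕ → ℕ) (i : ℕ) : ℕ :=
  if i < n then v i else if i = n then a else t (i - (n + 1))

lemma splice_apply_of_lt {i : ℕ} (h : i < n) : splice v n a t i = v i := if_pos h

@[simp] lemma splice_apply_self : splice v n a t n = a := by simp [splice]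

@[simp] lemma splice_apply_add (i : ℕ) : splice v n a t (i + (n + 1)) = t i := by
  simp [splice, show ¬ i + (n + 1) < n by omega, show i + (n + 1) ≠ n by omega]

lemma splice_self (d : ℕ → ℕ) (n : ℕ) : splice d n (d n) (fun i => d (i + (n + 1))) = d := by
  funext i
  unfold splice
  split_ifs with h₁ h₂
  · rfl
  · rw [h₂]
  · exact congrArg d (by omega)

lemma splice_le (hv : ∀ i, v i ≤ M) (ha : a ≤ M) (ht : ∀ i, t i ≤ M) (i : ℕ) :
    splice v n a t i ≤ M := by
  unfold splice
  split_ifs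
  exacts [hv i, ha, ht _]

/-- The value, in units of `q^{-(n+1)}`, that the digits from position `n` on must represent for
the prefix `v₀ ⋯ v_{n-1}` to extend to an expansion of `1`. -/
def residual (q : ℝ) (v : ℕ → ℕ) (n : ℕ) : ℝ :=
  q ^ (n + 1) * (1 - ∑ i ∈ Finset.range n, (v i : ℝ) / q ^ (i + 1))

lemma residual_congr {w : ℕ → ℕ} (h : ∀ i < n, v i = w i) : residual q v n = residual q w n := by
  rw [residual, residual, Finset.sum_congr rfl fun i hi => by rw [h i (Finset.mem_range.1 hi)]]

lemma residual_le_residual {p : ℝ} (hq : 0 < q) (hqp : q ≤ p)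
    (hres : 0 ≤ residual q v n) : residual q v n ≤ residual p v n := by
  unfold residual at *
  have hsum : ∑ i ∈ Finset.range n, (v i : ℝ) / p ^ (i + 1)
      ≤ ∑ i ∈ Finset.range n, (v i : ℝ) / q ^ (i + 1) :=
    Finset.sum_le_sum fun i _ => by gcongr
  have hpos : 0 ≤ 1 - ∑ i ∈ Finset.range n, (v i : ℝ) / q ^ (i + 1) :=
    nonneg_of_mul_nonneg_right hres (by positivity)
  calc q ^ (n + 1) * (1 - ∑ i ∈ Finset.range n, (v i : ℝ) / q ^ (i + 1))
      ≤ p ^ (n + 1) * (1 - ∑ i ∈ Finset.range n, (v i : ℝ) / q ^ (i + 1)) := by gcongr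
    _ ≤ p ^ (n + 1) * (1 - ∑ i ∈ Finset.range n, (v i : ℝ) / p ^ (i + 1)) := by
        have hp : 0 < p := hq.trans_le hqp
        gcongr

lemma piQ_splice_eq_one_iff (hq : 1 < q) (hv : ∀ i, v i ≤ M) (ha : a ≤ M) (ht : ∀ i, t i ≤ M) :
    piQ q (splice v n a t) = 1 ↔ a + piQ q t = residual q v n := by
  have hqn : q ^ (n + 1) ≠ 0 := by positivity
  rw [piQ_eq_sum_add_piQ_shift hq (splice_le hv ha ht) (n + 1), Finset.sum_range_succ,
    Finset.sum_congr rfl fun i hi => by rw [splice_apply_of_lt (Finset.mem_range.1 hi)]]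
  simp only [splice_apply_add, splice_apply_self, residual]
  constructor <;> intro h <;> field_simp at h ⊢ <;> linarith

lemma residual_eq_add_piQ_shift (hq : 1 < q) (hd : IsExpansion M q 1 d) (n : ℕ) :
    residual q d n = d n + piQ q (fun i => d (i + (n + 1))) := by
  refine ((piQ_splice_eq_one_iff hq hd.1 (hd.1 n) fun i => hd.1 _).1 ?_).symm
  rw [splice_self]
  exact hd.2

end Prefixes

section Greedy

variable {y : ℝ}

def greedyRem (M : ℕ) (q y : ℝ) : ℕ → ℝ
  | 0 => y
  | n + 1 => q * greedyRem M q y n - (min M ⌊q * greedyRem M q y n⌋₊ : ℕ)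

def greedyDigit (M : ℕ) (q y : ℝ) (n : ℕ) : ℕ := min M ⌊q * greedyRem M q y n⌋₊

lemma greedyRem_succ (n : ℕ) :
    greedyRem M q y (n + 1) = q * greedyRem M q y n - greedyDigit M q y n := rfl

lemma greedyRem_mem (hq : 1 < q) (hqM : q ≤ M + 1) (hy : y ∈ Icc 0 (M / (q - 1))) (n : ℕ) :
    greedyRem M q y n ∈ Icc 0 (M / (q - 1)) := by
  induction n with
  | zero => exact hy
  | succ n ih =>
    have hq1 : 0 < q - 1 := by linarith
    have hz : 0 ≤ q * greedyRem M q y n := mul_nonneg (by linarith) ih.1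
    have hfloor := Nat.floor_le hz
    have hlt_floor := Nat.lt_floor_add_one (q * greedyRem M q y n)
    rw [greedyRem_succ, greedyDigit]
    rcases le_total M ⌊q * greedyRem M q y n⌋₊ with h | h
    · have hM : (M : ℝ) ≤ ⌊q * greedyRem M q y n⌋₊ := by exact_mod_cast h
      have hqL : q * (M / (q - 1)) - M = M / (q - 1) := by field_simp; ring
      have := mul_le_mul_of_nonneg_left ih.2 (by linarith : 0 ≤ q)
      rw [min_eq_left h]
      constructor <;> linarith
    · have hL : 1 ≤ M / (q - 1) := by rw [le_div_iff₀ hq1]; linarith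
      rw [min_eq_right h]
      constructor <;> linarith

lemma sum_greedyDigit (hq : 0 < q) (n : ℕ) :
    ∑ i ∈ Finset.range n, (greedyDigit M q y i : ℝ) / q ^ (i + 1) = y - greedyRem M q y n / q ^ n := by
  induction n with
  | zero => simp [greedyRem]
  | succ n ih =>
    rw [Finset.sum_range_succ, ih, greedyRem_succ, pow_succ]
    field_simp
    ring

lemma exists_isExpansion (hq : 1 < q) (hqM : q ≤ M + 1) (hy : y ∈ Icc 0 (M / (q - 1))) :
    ∃ d, IsExpansion M q y d := by
  have hq0 : 0 < q := one_pos.trans hq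
  have hrem : Tendsto (fun n => greedyRem M q y n / q ^ n) atTop (𝓝 0) :=
    squeeze_zero (fun n => div_nonneg (greedyRem_mem hq hqM hy n).1 (by positivity))
      (fun n => div_le_div_of_nonneg_right (greedyRem_mem hq hqM hy n).2 (by positivity))
      (tendsto_const_nhds.div_atTop (tendsto_pow_atTop_atTop_of_one_lt hq))
  have hsum : Tendsto (fun n => ∑ i ∈ Finset.range n, (greedyDigit M q y i : ℝ) / q ^ (i + 1))
      atTop (𝓝 y) := by
    simpa only [sum_greedyDigit hq0, sub_zero] using tendsto_const_nhds.sub hrem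
  have hd : ∀ i, greedyDigit M q y i ≤ M := fun i => min_le_left _ _
  exact ⟨greedyDigit M q y, hd,
    tendsto_nhds_unique (summable_digits hq hd).hasSum.tendsto_sum_nat hsum⟩

end Greedy

/-- The prefix `v₀ ⋯ v_{n-1}` extends to expansions of `1` with next digit `g` and with next
digit `g' > g`; the strict upper bound makes this survive a small increase of `q`. -/
def HasStrictBranch (M : ℕ) (q : ℝ) : Prop :=
  ∃ (v : ℕ → ℕ) (n g g' : ℕ), (∀ i, v i ≤ M) ∧ g < g' ∧ g' ≤ M ∧
    (g' : ℝ) ≤ residual q v n ∧ residual q v n < g + M / (q - 1)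

lemma not_mem_univBases_of_hasStrictBranch (hq : 1 < q) (hqM : q ≤ M + 1)
    (h : HasStrictBranch M q) : q ∉ UnivBases M := by
  obtain ⟨v, n, g, g', hv, hgg', hg'M, hlow, hupp⟩ := h
  have hgg'_real : (g : ℝ) < g' := by exact_mod_cast hgg'
  obtain ⟨t, ht, htv⟩ := exists_isExpansion (y := residual q v n - g) hq hqM
    ⟨by linarith, by linarith⟩
  obtain ⟨t', ht', ht'v⟩ := exists_isExpansion (y := residual q v n - g') hq hqM
    ⟨by linarith, by linarith⟩
  rintro ⟨-, -, d, -, huniq⟩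
  have he := huniq (splice v n g t)
    ⟨splice_le hv (hgg'.le.trans hg'M) ht, (piQ_splice_eq_one_iff hq hv (hgg'.le.trans hg'M) ht).2
      (by linarith)⟩
  have he' := huniq (splice v n g' t')
    ⟨splice_le hv hg'M ht', (piQ_splice_eq_one_iff hq hv hg'M ht').2 (by linarith)⟩
  have := congrFun (he.trans he'.symm) n
  simp only [splice_apply_self] at this
  omega

lemma HasStrictBranch.eventually (hq : 1 < q) (h : HasStrictBranch M q) :
    ∀ᶠ p in 𝓝[>] q, HasStrictBranch M p := by
  obtain ⟨v, n, g, g', hv, hgg', hg'M, hlow, hupp⟩ := h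
  have hq0 : q ≠ 0 := by positivity
  have hq1 : q - 1 ≠ 0 := by linarith
  have hcont : ContinuousAt (fun p => g + M / (p - 1) - residual p v n) q := by
    unfold residual
    fun_prop (disch := positivity)
  have hupp' : ∀ᶠ p in 𝓝 q, residual p v n < g + M / (p - 1) :=
    (hcont.eventually (lt_mem_nhds (sub_pos.2 hupp))).mono fun p hp => sub_pos.1 hp
  filter_upwards [nhdsWithin_le_nhds hupp', self_mem_nhdsWithin] with p hp hqp
  exact ⟨v, n, g, g', hv, hgg', hg'M,
    hlow.trans (residual_le_residual (by linarith) (le_of_lt hqp) ((Nat.cast_nonneg _).trans hlow)),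
    hp⟩

lemma le_piQ_shift_of_not_hasStrictBranch (hq : 1 < q) (h : ¬ HasStrictBranch M q)
    (hd : IsExpansion M q 1 d) {k : ℕ} (hk : 0 < d k) :
    M / (q - 1) - 1 ≤ piQ q (fun i => d (i + (k + 1))) := by
  by_contra! hlt
  have hres := residual_eq_add_piQ_shift hq hd k
  refine h ⟨d, k, d k - 1, d k, hd.1, by omega, hd.1 k, ?_, ?_⟩
  · rw [hres]
    linarith [piQ_nonneg (d := fun i => d (i + (k + 1))) (by linarith : 0 ≤ q)]
  · rw [hres, Nat.cast_sub hk]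
    push_cast
    linarith

lemma piQ_shift_eq_of_not_hasStrictBranch (hq : 1 < q) (h : ¬ HasStrictBranch M q)
    {c c' : ℕ → ℕ} (hc : IsExpansion M q 1 c) (hc' : IsExpansion M q 1 c') {k : ℕ}
    (hpre : ∀ i < k, c i = c' i) (hlt : c k < c' k) :
    piQ q (fun i => c (i + (k + 1))) = M / (q - 1) := by
  refine le_antisymm (piQ_le hq fun i => hc.1 _) (not_lt.1 fun hlt' => h ⟨c, k, c k, c' k,
    hc.1, hlt, hc'.1 k, ?_, ?_⟩)
  · rw [residual_congr hpre, residual_eq_add_piQ_shift hq hc' k]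
    linarith [piQ_nonneg (d := fun i => c' (i + (k + 1))) (by linarith : 0 ≤ q)]
  · rw [residual_eq_add_piQ_shift hq hc k]
    linarith

lemma hasStrictBranch_of_lt (hq : 1 < q) (hqM : q < M + 1) {c c' : ℕ → ℕ}
    (hc : IsExpansion M q 1 c) (hc' : IsExpansion M q 1 c') {k : ℕ}
    (hpre : ∀ i < k, c i = c' i) (hlt : c k < c' k) : HasStrictBranch M q := by
  by_contra h
  have hL : 1 < M / (q - 1) := by rw [lt_div_iff₀ (by linarith)]; linarith
  have htail := piQ_shift_eq_of_not_hasStrictBranch hq h hc hc' hpre hlt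
  have hck : c k + 1 ≤ M := hlt.trans_le (hc'.1 k)
  -- `e = c₀ ⋯ c_{k-1} (c_k + 1) c̄` is again an expansion of `1`, but its nonzero digit
  -- `M - c_k` at position `2k + 1` is followed by digits of value `0`.
  set e := splice c k (c k + 1) (fun i => M - c i)
  have he : IsExpansion M q 1 e := by
    refine ⟨splice_le hc.1 hck fun _ => Nat.sub_le _ _,
      (piQ_splice_eq_one_iff hq hc.1 hck fun _ => Nat.sub_le _ _).2 ?_⟩
    rw [piQ_reflect hq hc.1, hc.2, residual_eq_add_piQ_shift hq hc k, htail]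
    push_cast
    ring
  have hek : e (k + (k + 1)) = M - c k := splice_apply_add k
  have hshift : (fun i => e (i + (k + (k + 1) + 1))) = fun i => M - c (i + (k + 1)) := by
    funext i
    rw [show i + (k + (k + 1) + 1) = i + (k + 1) + (k + 1) by omega]
    exact splice_apply_add _
  have hbound := le_piQ_shift_of_not_hasStrictBranch hq h he (k := k + (k + 1)) (by omega)
  rw [hshift, piQ_reflect hq fun i => hc.1 _, htail] at hbound
  linarith

lemma exists_ne_isExpansion_of_not_mem_univBases (hq : 1 < q) (hqM : q ≤ M + 1)
    (hU : q ∉ UnivBases M) :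
    ∃ c c', c ≠ c' ∧ IsExpansion M q 1 c ∧ IsExpansion M q 1 c' := by
  obtain ⟨d, hd⟩ := exists_isExpansion (y := 1) hq hqM
    ⟨zero_le_one, by rw [le_div_iff₀ (by linarith)]; linarith⟩
  by_contra! hne
  exact hU ⟨hq, hqM, d, hd, fun e he => by_contra fun h => hne e d h he hd⟩

lemma hasStrictBranch_of_not_mem_univBases (hq : 1 < q) (hqM : q < M + 1)
    (hU : q ∉ UnivBases M) : HasStrictBranch M q := by
  obtain ⟨c, c', hne, hc, hc'⟩ := exists_ne_isExpansion_of_not_mem_univBases hq hqM.le hU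
  have hex : ∃ k, c k ≠ c' k := Function.ne_iff.1 hne
  have hpre : ∀ i < Nat.find hex, c i = c' i := fun i hi => not_not.1 (Nat.find_min hex hi)
  rcases (Nat.find_spec hex).lt_or_gt with hlt | hlt
  · exact hasStrictBranch_of_lt hq hqM hc hc' hpre hlt
  · exact hasStrictBranch_of_lt hq hqM hc' hc (fun i hi => (hpre i hi).symm) hlt

lemma top_mem_univBases (hM : 0 < M) : (M : ℝ) + 1 ∈ UnivBases M := by
  have hq : 1 < (M : ℝ) + 1 := by
    have : (0 : ℝ) < M := by exact_mod_cast hM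
    linarith
  have hL : (M : ℝ) / (M + 1 - 1) = 1 := by
    rw [add_sub_cancel_right, div_self]
    positivity
  refine ⟨hq, le_rfl, fun _ => M, ⟨fun _ => le_rfl, by rw [piQ_const hq, hL]⟩, fun d hd => ?_⟩
  have hzero : piQ ((M : ℝ) + 1) (fun i => M - d i) = 0 := by
    rw [piQ_reflect hq hd.1, hd.2, hL, sub_self]
  rw [piQ] at hzero
  have hterms := (hasSum_zero_iff_of_nonneg fun i => by positivity).1
    (hzero ▸ (summable_digits hq fun i => Nat.sub_le M (d i)).hasSum)
  funext i
  have hi := congrFun hterms i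
  simp only [Pi.zero_apply, div_eq_zero_iff, pow_eq_zero_iff', Nat.cast_eq_zero] at hi
  have := hd.1 i
  rcases hi with hi | ⟨hi, -⟩
  · omega
  · linarith

lemma exists_univBases_inter_Ioo_eq_empty (hq : 1 < q) (hqM : q ≤ M + 1)
    (hU : q ∉ UnivBases M) : ∃ r ∈ Ioc q ((M : ℝ) + 1), UnivBases M ∩ Ioo q r = ∅ := by
  have hM : 0 < M := Nat.cast_pos.1 (by linarith : (0 : ℝ) < M)
  have hqM' : q < M + 1 := hqM.lt_of_ne fun h => hU (h ▸ top_mem_univBases hM)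
  obtain ⟨u, hu, hsub⟩ := mem_nhdsGT_iff_exists_Ioo_subset.1
    ((hasStrictBranch_of_not_mem_univBases hq hqM' hU).eventually hq)
  refine ⟨min u (M + 1), ⟨lt_min hu hqM', min_le_right _ _⟩, eq_empty_of_forall_notMem ?_⟩
  rintro p ⟨hpU, hqp, hpr⟩
  exact not_mem_univBases_of_hasStrictBranch (hq.trans hqp) (hpr.le.trans (min_le_right _ _))
    (hsub ⟨hqp, hpr.trans_le (min_le_left _ _)⟩) hpU

end Univoque

theorem stmt3_general (M : ℕ) (q : ℝ) (hq : q ∈ Ioc 1 ((M : ℝ) + 1)) :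
    ((∀ r ∈ Ioc q ((M : ℝ) + 1), 0 < dimH (UnivBases M ∩ Ioo q r)) →
      q ∈ UnivBases M) ∧
    (q ∉ UnivBases M →
      ∃ r ∈ Ioc q ((M : ℝ) + 1), UnivBases M ∩ Ioo q r = ∅) := by
  have hgap := Univoque.exists_univBases_inter_Ioo_eq_empty hq.1 hq.2
  refine ⟨fun hdim => by_contra fun hU => ?_, hgap⟩
  obtain ⟨r, hr, hempty⟩ := hgap hU
  simpa [hempty] using hdim r hr

/-- If `dim_H (U ∩ (q, r)) > 0` for every `r ∈ (q, M+1]`, then `q ∈ U`;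
moreover (the stronger contrapositive) if `q ∉ U` then `U ∩ (q, r) = ∅` for
some `r ∈ (q, M+1]`. -/
theorem stmt3 (M : ℕ) (hM : 0 < M) (q : ℝ) (hq : q ∈ Ioc 1 ((M : ℝ) + 1)) :
    ((∀ r ∈ Ioc q ((M : ℝ) + 1), 0 < dimH (UnivBases M ∩ Ioo q r)) →
      q ∈ UnivBases M) ∧
    (q ∉ UnivBases M →
      ∃ r ∈ Ioc q ((M : ℝ) + 1), UnivBases M ∩ Ioo q r = ∅) :=
  stmt3_general M q hq

end
end

section
/- Let M be a positive integer and q ∈ (1, M+1]. If for every p ∈ (1, q) the Hausdorff dimension of U ∩ (p, q) is strictly positive, then q belongs to the closure of U, q ≠ q', and q is not the right endpoint q_0^* of any connected component of (1, M+1) \ closure(U). In fact, the paper proves the contrapositive in the stronger form: if q ∈ (1, q'] or q ∈ (q_0, q_0^*] for some connected component (q_0, q_0^*), then U ∩ (p, q) = ∅ for p ∈ (1, q) sufficiently close to q. -/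
open Set MeasureTheory Filter

noncomputable section

theorem Set.Nonempty.of_dimH_pos {X : Type*} [EMetricSpace X] {s : Set X}
    (h : 0 < dimH s) : s.Nonempty :=
  nonempty_iff_ne_empty.2 fun hs => by simp [hs] at h

section LeftNeighbourhood

variable {s : Set ℝ} {l q : ℝ}

theorem exists_mem_Ioo_inter_Ioo_eq_empty (hlq : l < q) {a : ℝ} (haq : a < q)
    (ha : s ∩ Ioo a q = ∅) : ∃ p ∈ Ioo l q, s ∩ Ioo p q = ∅ :=
  ⟨max a ((l + q) / 2), ⟨(by linarith : l < (l + q) / 2).trans_le (le_max_right _ _),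
    max_lt haq (by linarith)⟩,
    subset_eq_empty (inter_subset_inter_right _ (Ioo_subset_Ioo_left (le_max_left _ _))) ha⟩

theorem mem_closure_of_forall_inter_Ioo_nonempty (hlq : l < q)
    (h : ∀ p ∈ Ioo l q, (s ∩ Ioo p q).Nonempty) : q ∈ closure s := by
  refine Metric.mem_closure_iff.2 fun ε hε => ?_
  set p := max ((l + q) / 2) (q - ε)
  have hp : p ∈ Ioo l q :=
    ⟨(by linarith : l < (l + q) / 2).trans_le (le_max_left _ _), max_lt (by linarith) (by linarith)⟩
  obtain ⟨x, hxs, hpx, hxq⟩ := h p hp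
  refine ⟨x, hxs, ?_⟩
  rw [Real.dist_eq, abs_of_pos (by linarith)]
  linarith [le_max_right ((l + q) / 2) (q - ε)]

end LeftNeighbourhood

section UnivBases

variable {M : ℕ} {q : ℝ}

theorem KL_le_of_mem_univBases {x : ℝ} (hx : x ∈ UnivBases M) : KL M ≤ x :=
  csInf_le ⟨1, fun _ hy => hy.1.le⟩ hx

theorem univBases_inter_Ioo_eq_empty_of_le_KL (hq : q ≤ KL M) (p : ℝ) :
    UnivBases M ∩ Ioo p q = ∅ :=
  eq_empty_of_forall_notMem fun _ ⟨hxU, _, hxq⟩ =>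
    (KL_le_of_mem_univBases hxU).not_gt (hxq.trans_le hq)

theorem CC.univBases_inter_Ioo_eq_empty {a b : ℝ} (h : CC M a b) (hq : q ≤ b) :
    UnivBases M ∩ Ioo a q = ∅ :=
  eq_empty_of_forall_notMem fun _ ⟨hxU, hax, hxq⟩ =>
    (h.2.1 ⟨hax, hxq.trans_le hq⟩).2 (subset_closure hxU)

theorem exists_univBases_inter_Ioo_eq_empty (hq : 1 < q)
    (h : q ∈ Ioc (1 : ℝ) (KL M) ∨ ∃ a b : ℝ, CC M a b ∧ q ∈ Ioc a b) :
    ∃ p ∈ Ioo (1 : ℝ) q, UnivBases M ∩ Ioo p q = ∅ := by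
  rcases h with ⟨-, hqKL⟩ | ⟨a, b, hab, haq, hqb⟩
  · exact exists_mem_Ioo_inter_Ioo_eq_empty hq hq (univBases_inter_Ioo_eq_empty_of_le_KL hqKL 1)
  · exact exists_mem_Ioo_inter_Ioo_eq_empty hq haq (hab.univBases_inter_Ioo_eq_empty hqb)

end UnivBases

theorem stmt7_general (M : ℕ) (q : ℝ) (hq : q ∈ Ioc 1 ((M : ℝ) + 1)) :
    ((∀ p ∈ Ioo (1 : ℝ) q, 0 < dimH (UnivBases M ∩ Ioo p q)) →
      q ∈ closure (UnivBases M) ∧ q ≠ KL M ∧ ¬∃ a : ℝ, CC M a q) ∧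
    ((q ∈ Ioc (1 : ℝ) (KL M) ∨ ∃ a b : ℝ, CC M a b ∧ q ∈ Ioc a b) →
      ∃ p ∈ Ioo (1 : ℝ) q, UnivBases M ∩ Ioo p q = ∅) := by
  have hq1 : 1 < q := hq.1
  refine ⟨fun hdim => ?_, exists_univBases_inter_Ioo_eq_empty hq1⟩
  have hne : ∀ p ∈ Ioo (1 : ℝ) q, (UnivBases M ∩ Ioo p q).Nonempty := fun p hp =>
    Set.Nonempty.of_dimH_pos (hdim p hp)
  have hnot : ¬∃ p ∈ Ioo (1 : ℝ) q, UnivBases M ∩ Ioo p q = ∅ := fun ⟨p, hp, he⟩ =>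
    (hne p hp).ne_empty he
  refine ⟨mem_closure_of_forall_inter_Ioo_nonempty hq1 hne, fun hKL => ?_, fun ⟨a, ha⟩ => ?_⟩
  · exact hnot (exists_univBases_inter_Ioo_eq_empty hq1 (Or.inl ⟨hq1, hKL.le⟩))
  · exact hnot (exists_univBases_inter_Ioo_eq_empty hq1 (Or.inr ⟨a, q, ha, ha.1, le_rfl⟩))

/-- If `dim_H (U ∩ (p, q)) > 0` for every `p ∈ (1, q)`, then `q ∈ closure U`,
`q ≠ q'` and `q` is not the right endpoint of any connected component of
`(q', M+1) \ closure U`; moreover (the stronger contrapositive) if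
`q ∈ (1, q']` or `q ∈ (q₀, q₀^*]` for some component, then `U ∩ (p, q) = ∅`
for `p ∈ (1, q)` sufficiently close to `q`. -/
theorem stmt7 (M : ℕ) (hM : 0 < M) (q : ℝ) (hq : q ∈ Ioc 1 ((M : ℝ) + 1)) :
    ((∀ p ∈ Ioo (1 : ℝ) q, 0 < dimH (UnivBases M ∩ Ioo p q)) →
      q ∈ closure (UnivBases M) ∧ q ≠ KL M ∧ ¬∃ a : ℝ, CC M a q) ∧
    ((q ∈ Ioc (1 : ℝ) (KL M) ∨ ∃ a b : ℝ, CC M a b ∧ q ∈ Ioc a b) →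
      ∃ p ∈ Ioo (1 : ℝ) q, UnivBases M ∩ Ioo p q = ∅) :=
  stmt7_general M q hq

end
end

section
/- Let M be a positive integer and q ∈ (1, M+1]. If q ∈ U, i.e., 1 has a unique q-expansion, then the number x = 1/q has exactly two distinct q-expansions. Consequently U ⊆ B_2. -/
/-! An expansion of `1/q` either starts with the digit `1`, and then its remaining digits expand
`0`, so they all vanish, or starts with `0`, and then its remaining digits expand `1`. When `1` has
a unique expansion `α`, this leaves exactly `10^∞` and `0α`; and `1/q ≤ 1 ≤ M/(q-1)` puts `q` in
`B₂`. -/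

open Set MeasureTheory Filter

noncomputable section

section Expansions

variable {M : ℕ} {q : ℝ}

lemma summable_digits_div_pow (hq : 1 < q) {d : ℕ → ℕ} (hd : ∀ i, d i ≤ M) :
    Summable fun i => (d i : ℝ) / q ^ (i + 1) := by
  have hq0 : 0 < q := one_pos.trans hq
  have hgeo : Summable fun i : ℕ => (M / q : ℝ) * (1 / q) ^ i :=
    (summable_geometric_of_lt_one (by positivity) ((div_lt_one hq0).2 hq)).mul_left _
  refine hgeo.of_nonneg_of_le (fun i => by positivity) fun i => ?_
  rw [one_div_pow, mul_one_div, div_div, ← pow_succ']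
  gcongr
  exact_mod_cast hd i

lemma piQ_nonneg (d : ℕ → ℕ) (hq : 1 < q) : 0 ≤ piQ q d :=
  tsum_nonneg fun i => by have := one_pos.trans hq; positivity

lemma piQ_eq_head_add_tail_div (hq : 1 < q) {d : ℕ → ℕ} (hd : ∀ i, d i ≤ M) :
    piQ q d = (d 0 + piQ q fun i => d (i + 1)) / q := by
  rw [piQ, (summable_digits_div_pow hq hd).tsum_eq_zero_add, piQ, add_div, ← tsum_div_const]
  congr 1
  · ring
  · congr 1 with i
    ring

lemma eq_zero_of_piQ_eq_zero (hq : 1 < q) {d : ℕ → ℕ} (hd : ∀ i, d i ≤ M)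
    (h : piQ q d = 0) (i : ℕ) : d i = 0 := by
  have hq0 : 0 < q := one_pos.trans hq
  have hsum : HasSum (fun i => (d i : ℝ) / q ^ (i + 1)) 0 :=
    h ▸ (summable_digits_div_pow hq hd).hasSum
  have := congrFun ((hasSum_zero_iff_of_nonneg fun i => by positivity).1 hsum) i
  simpa [hq0.ne'] using this

lemma piQ_eq_one_div_iff (hq : 1 < q) {f : ℕ → ℕ} (hf : ∀ i, f i ≤ M) :
    piQ q f = 1 / q ↔
      (f 0 = 1 ∧ piQ q (fun i => f (i + 1)) = 0) ∨ (f 0 = 0 ∧ piQ q (fun i => f (i + 1)) = 1) := by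
  have htail := piQ_nonneg (fun i => f (i + 1)) hq
  rw [piQ_eq_head_add_tail_div hq hf, div_left_inj' (one_pos.trans hq).ne']
  constructor
  · intro h
    have : f 0 ≤ 1 := by exact_mod_cast (by linarith : (f 0 : ℝ) ≤ 1)
    interval_cases h0 : f 0
    · right; simp_all
    · left; simp_all
  · rintro (⟨h0, ht⟩ | ⟨h0, ht⟩) <;> simp [h0, ht]

lemma hasExactlyTwoExpansions_one_div (hq : 1 < q) (hM : 1 ≤ M)
    (h : ∃! d : ℕ → ℕ, IsExpansion M q 1 d) : HasExactlyTwoExpansions M q (1 / q) := by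
  obtain ⟨d, ⟨hdM, hd⟩, hd_unique⟩ := h
  have hsingle : ∀ i, (Pi.single 0 1 : ℕ → ℕ) i ≤ M := fun i => by
    rw [Pi.single_apply]; split <;> omega
  have hcons : ∀ i, Stream'.cons 0 d i ≤ M := fun
    | 0 => Nat.zero_le M
    | i + 1 => hdM i
  refine ⟨Pi.single 0 1, Stream'.cons 0 d, fun h => by simpa [Stream'.cons] using congrFun h 0,
    ⟨hsingle, (piQ_eq_one_div_iff hq hsingle).2 (Or.inl ⟨rfl, by simp [piQ]⟩)⟩,
    ⟨hcons, (piQ_eq_one_div_iff hq hcons).2 (Or.inr ⟨rfl, hd⟩)⟩, fun f ⟨hfM, hf⟩ => ?_⟩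
  rcases (piQ_eq_one_div_iff hq hfM).1 hf with ⟨h0, htail⟩ | ⟨h0, htail⟩
  · left
    funext i
    cases i with
    | zero => simpa using h0
    | succ i => simpa using eq_zero_of_piQ_eq_zero hq (fun i => hfM (i + 1)) htail i
  · right
    have := hd_unique _ ⟨fun i => hfM (i + 1), htail⟩
    funext i
    cases i with
    | zero => exact h0
    | succ i => exact congrFun this i

lemma one_le_of_mem_univBases (hq : q ∈ UnivBases M) : 1 ≤ M := by
  have : (0 : ℝ) < M := by linarith [hq.1, hq.2.1]
  exact_mod_cast this

lemma hasExactlyTwoExpansions_one_div_of_mem_univBases (hq : q ∈ UnivBases M) :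
    HasExactlyTwoExpansions M q (1 / q) :=
  hasExactlyTwoExpansions_one_div hq.1 (one_le_of_mem_univBases hq) hq.2.2

lemma univBases_subset_b2 : UnivBases M ⊆ B2 M := by
  intro q hq
  have ⟨hq1, hqM, _⟩ := hq
  have hq0 : 0 < q := one_pos.trans hq1
  have h_le_one : 1 / q ≤ 1 := (div_le_one hq0).2 hq1.le
  have h_one_le : 1 ≤ (M : ℝ) / (q - 1) := (one_le_div (by linarith)).2 (by linarith)
  exact ⟨hq1, hqM, 1 / q, ⟨by positivity, h_le_one.trans h_one_le⟩,
    hasExactlyTwoExpansions_one_div_of_mem_univBases hq⟩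

end Expansions

theorem stmt10_general (M : ℕ) (q : ℝ)
    (hqU : q ∈ UnivBases M) :
    HasExactlyTwoExpansions M q (1 / q) ∧ UnivBases M ⊆ B2 M :=
  ⟨hasExactlyTwoExpansions_one_div_of_mem_univBases hqU, univBases_subset_b2⟩

/-- If `q ∈ U`, then `1/q` has exactly two distinct `q`-expansions;
consequently `U ⊆ B₂`. -/
theorem stmt10 (M : ℕ) (hM : 0 < M) (q : ℝ) (hq : q ∈ Ioc 1 ((M : ℝ) + 1))
    (hqU : q ∈ UnivBases M) :
    HasExactlyTwoExpansions M q (1 / q) ∧ UnivBases M ⊆ B2 M :=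
  stmt10_general M q hqU
end
end

section
/- Let M be a positive integer, q ∈ U with q ≠ M+1, and r ∈ (q, M+1). Then dim_H(U ∩ (q, r)) ≥ dim_H π_{M+1}({α(p) : p ∈ U ∩ (q, r)}). -/
open Set MeasureTheory Filter

noncomputable section

/-!
For `p ∈ U` the quasi-greedy expansion `α(p)` is the unique expansion of `1`, so the set on the
left is the image of `U ∩ (q, r)` under `p ↦ π_{M+1}(α(p))`, and it suffices to show that this map
is Lipschitz there. Let `p < p'` in `U ∩ (q, r)` and let `n` be the first index where `a = α(p)`
and `b = α(p')` differ. Tails of unique expansions are unique, so `π_p(σ^{n+1} a) < 1` if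
`a_n < M` and `π_{p'}(σ^{n+1} b) > M/(p'-1) - 1` if `b_n > 0`. Comparing `π_p(a) = 1 = π_{p'}(b)`
at digit `n` then forces `a_n < b_n` and
`(M/(r-1) - 1) p'^{-(n+1)} ≤ π_p(a) - π_{p'}(a) ≤ M (p' - p) / (q-1)^2`,
while `|π_{M+1}(a) - π_{M+1}(b)| ≤ (M+1)^{-n} ≤ r^{-n}`.
-/

def shiftSeq (d : ℕ → ℕ) (k : ℕ) : ℕ → ℕ := fun i => d (i + k)

def spliceSeq (d : ℕ → ℕ) (j : ℕ) (e : ℕ → ℕ) : ℕ → ℕ :=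
  fun i => if i < j then d i else e (i - j)

lemma shiftSeq_shiftSeq (d : ℕ → ℕ) (j k : ℕ) :
    shiftSeq (shiftSeq d j) k = shiftSeq d (k + j) := by
  funext i
  simp only [shiftSeq, Nat.add_assoc]

lemma shiftSeq_spliceSeq (d : ℕ → ℕ) (j : ℕ) (e : ℕ → ℕ) :
    shiftSeq (spliceSeq d j e) j = e := by
  funext i
  simp [shiftSeq, spliceSeq]

lemma spliceSeq_le {M : ℕ} {d e : ℕ → ℕ} (hd : ∀ i, d i ≤ M) (he : ∀ i, e i ≤ M)
    (j i : ℕ) : spliceSeq d j e i ≤ M := by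
  unfold spliceSeq
  split_ifs
  exacts [hd i, he _]

lemma exists_forall_lt_eq_and_ne {a b : ℕ → ℕ} (hab : a ≠ b) :
    ∃ n, (∀ i < n, a i = b i) ∧ a n ≠ b n := by
  classical
  have hex : ∃ n, a n ≠ b n := Function.ne_iff.mp hab
  exact ⟨Nat.find hex, fun i hi => not_not.mp (Nat.find_min hex hi), Nat.find_spec hex⟩

section Projection

variable {M : ℕ} {ρ ρ' : ℝ} {c d : ℕ → ℕ}

lemma summable_piQ (hρ : 1 < ρ) (hd : ∀ i, d i ≤ M) :
    Summable fun i : ℕ => (d i : ℝ) / ρ ^ (i + 1) := by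
  have hgeom : Summable fun i : ℕ => (M / ρ : ℝ) * (ρ⁻¹) ^ i :=
    (summable_geometric_of_lt_one (by positivity) (inv_lt_one_of_one_lt₀ hρ)).mul_left _
  refine hgeom.of_nonneg_of_le (fun i => by positivity) fun i => ?_
  rw [inv_pow, ← div_eq_mul_inv, div_div, ← pow_succ']
  gcongr
  exact_mod_cast hd i

lemma piQ_nonneg_s15 (hρ : 0 < ρ) (d : ℕ → ℕ) : 0 ≤ piQ ρ d :=
  tsum_nonneg fun i => by positivity

lemma piQ_const (hρ : 1 < ρ) (N : ℕ) : piQ ρ (fun _ => N) = N / (ρ - 1) := by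
  have hρ0 : ρ ≠ 0 := by positivity
  have hsum := tsum_geometric_of_lt_one (by positivity) (inv_lt_one_of_one_lt₀ hρ)
  calc piQ ρ (fun _ => N) = ∑' i : ℕ, (N / ρ : ℝ) * (ρ⁻¹) ^ i := by
        refine tsum_congr fun i => ?_
        rw [inv_pow, pow_succ]
        field_simp
    _ = N / (ρ - 1) := by
        rw [tsum_mul_left, hsum]
        have : ρ - 1 ≠ 0 := by linarith
        field_simp

lemma piQ_le (hρ : 1 < ρ) (hd : ∀ i, d i ≤ M) : piQ ρ d ≤ M / (ρ - 1) := by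
  rw [← piQ_const hρ M]
  refine Summable.tsum_le_tsum (fun i => ?_) (summable_piQ hρ hd)
    (summable_piQ (M := M) hρ fun _ => le_rfl)
  gcongr
  exact_mod_cast hd i

lemma piQ_eq_sum_add_shiftSeq (hρ : 1 < ρ) (hd : ∀ i, d i ≤ M) (k : ℕ) :
    piQ ρ d =
      ∑ i ∈ Finset.range k, (d i : ℝ) / ρ ^ (i + 1) + piQ ρ (shiftSeq d k) / ρ ^ k := by
  rw [piQ, ← (summable_piQ hρ hd).sum_add_tsum_nat_add k, piQ, ← tsum_div_const]
  congr 1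
  refine tsum_congr fun i => ?_
  rw [shiftSeq, div_div, ← pow_add, Nat.add_right_comm]

lemma piQ_eq_head_add_shiftSeq (hρ : 1 < ρ) (hd : ∀ i, d i ≤ M) :
    piQ ρ d = (d 0 + piQ ρ (shiftSeq d 1)) / ρ := by
  rw [piQ_eq_sum_add_shiftSeq hρ hd 1]
  simp [add_div]

lemma piQ_shiftSeq_eq (hρ : 1 < ρ) (hd : ∀ i, d i ≤ M) (n : ℕ) :
    piQ ρ (shiftSeq d n) = (d n + piQ ρ (shiftSeq d (n + 1))) / ρ := by
  rw [piQ_eq_head_add_shiftSeq (d := shiftSeq d n) hρ fun i => hd (i + n), shiftSeq_shiftSeq,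
    Nat.add_comm 1]
  simp [shiftSeq]

lemma exists_ne_zero_of_piQ_ne_zero (h : piQ ρ d ≠ 0) : ∃ j, d j ≠ 0 := by
  by_contra! hzero
  simp [piQ, hzero] at h

lemma piQ_sub_piQ_of_eqOn (hρ : 1 < ρ) (hc : ∀ i, c i ≤ M) (hd : ∀ i, d i ≤ M) {n : ℕ}
    (hcd : ∀ i < n, c i = d i) :
    piQ ρ d - piQ ρ c = (piQ ρ (shiftSeq d n) - piQ ρ (shiftSeq c n)) / ρ ^ n := by
  have hsum : ∑ i ∈ Finset.range n, (c i : ℝ) / ρ ^ (i + 1)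
      = ∑ i ∈ Finset.range n, (d i : ℝ) / ρ ^ (i + 1) :=
    Finset.sum_congr rfl fun i hi => by rw [hcd i (Finset.mem_range.mp hi)]
  rw [piQ_eq_sum_add_shiftSeq hρ hc n, piQ_eq_sum_add_shiftSeq hρ hd n, hsum]
  ring

lemma abs_piQ_sub_piQ_le_of_eqOn (hρ : 1 < ρ) (hc : ∀ i, c i ≤ M) (hd : ∀ i, d i ≤ M)
    {n : ℕ} (hcd : ∀ i < n, c i = d i) : |piQ ρ c - piQ ρ d| ≤ M / (ρ - 1) / ρ ^ n := by
  have hρ0 : 0 < ρ := by linarith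
  rw [abs_sub_comm, piQ_sub_piQ_of_eqOn hρ hc hd hcd, abs_div, abs_of_pos (pow_pos hρ0 n)]
  gcongr
  have := piQ_nonneg_s15 hρ0 (shiftSeq c n)
  have := piQ_nonneg_s15 hρ0 (shiftSeq d n)
  have : piQ ρ (shiftSeq c n) ≤ M / (ρ - 1) := piQ_le hρ fun i => hc (i + n)
  have : piQ ρ (shiftSeq d n) ≤ M / (ρ - 1) := piQ_le hρ fun i => hd (i + n)
  exact abs_sub_le_iff.mpr ⟨by linarith, by linarith⟩

lemma piQ_le_piQ_of_base_le (hρ : 1 < ρ) (hρρ' : ρ ≤ ρ') (hd : ∀ i, d i ≤ M) :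
    piQ ρ' d ≤ piQ ρ d :=
  Summable.tsum_le_tsum (fun i => by gcongr)
    (summable_piQ (hρ.trans_le hρρ') hd) (summable_piQ hρ hd)

lemma piQ_lt_piQ_of_base_lt (hρ : 1 < ρ) (hρρ' : ρ < ρ') (hd : ∀ i, d i ≤ M) {j : ℕ}
    (hj : d j ≠ 0) : piQ ρ' d < piQ ρ d :=
  Summable.tsum_lt_tsum (i := j) (fun i => by gcongr) (by gcongr)
    (summable_piQ (hρ.trans hρρ') hd) (summable_piQ hρ hd)

lemma piQ_sub_piQ_le (hρ : 1 < ρ) (hρρ' : ρ ≤ ρ') (hd : ∀ i, d i ≤ M) :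
    piQ ρ d - piQ ρ' d ≤ M / (ρ - 1) - M / (ρ' - 1) := by
  have hρ' : 1 < ρ' := hρ.trans_le hρρ'
  have hMρ := summable_piQ (M := M) hρ (d := fun _ => M) fun _ => le_rfl
  have hMρ' := summable_piQ (M := M) hρ' (d := fun _ => M) fun _ => le_rfl
  rw [← piQ_const hρ, ← piQ_const hρ', piQ, piQ, piQ, piQ,
    ← (summable_piQ hρ hd).tsum_sub (summable_piQ hρ' hd), ← hMρ.tsum_sub hMρ']
  refine Summable.tsum_le_tsum (fun i => ?_) ((summable_piQ hρ hd).sub (summable_piQ hρ' hd))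
    (hMρ.sub hMρ')
  simp only [div_eq_mul_inv, ← mul_sub]
  refine mul_le_mul_of_nonneg_right (by exact_mod_cast hd i) (sub_nonneg.mpr ?_)
  gcongr

end Projection

section Greedy

variable (M : ℕ) (ρ x : ℝ)

def greedyRem : ℕ → ℝ
  | 0 => x
  | n + 1 => ρ * greedyRem n - (min M ⌊ρ * greedyRem n⌋₊ : ℕ)

def greedyDigit (n : ℕ) : ℕ := min M ⌊ρ * greedyRem M ρ x n⌋₊

variable {M ρ x}

lemma greedyRem_mem_Icc (hρ : 1 < ρ) (hρM : ρ ≤ M + 1) (hx : x ∈ Icc 0 (M / (ρ - 1)))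
    (n : ℕ) : greedyRem M ρ x n ∈ Icc 0 (M / (ρ - 1)) := by
  induction n with
  | zero => exact hx
  | succ n ih =>
    have hρ1 : 0 < ρ - 1 := by linarith
    set t := ρ * greedyRem M ρ x n with ht
    have ht0 : 0 ≤ t := mul_nonneg (by linarith) ih.1
    have hfloor : (⌊t⌋₊ : ℝ) ≤ t := Nat.floor_le ht0
    have hmin : ((min M ⌊t⌋₊ : ℕ) : ℝ) ≤ ⌊t⌋₊ := mod_cast min_le_right _ _
    refine ⟨by simp only [greedyRem, ← ht]; linarith, ?_⟩
    simp only [greedyRem, ← ht]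
    rcases min_choice M ⌊t⌋₊ with h | h <;> rw [h]
    · have hM : t ≤ ρ * (M / (ρ - 1)) := mul_le_mul_of_nonneg_left ih.2 (by linarith)
      have : ρ * (M / (ρ - 1)) - M = M / (ρ - 1) := by field_simp; ring
      linarith
    · have : 1 ≤ (M : ℝ) / (ρ - 1) := by rw [le_div_iff₀ hρ1]; linarith
      linarith [Nat.lt_floor_add_one t]

lemma eq_sum_greedyDigit_add_greedyRem (hρ : 1 < ρ) (k : ℕ) :
    x = ∑ i ∈ Finset.range k, (greedyDigit M ρ x i : ℝ) / ρ ^ (i + 1)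
      + greedyRem M ρ x k / ρ ^ k := by
  induction k with
  | zero => simp [greedyRem]
  | succ k ih =>
    have hρ0 : ρ ≠ 0 := by positivity
    have hstep :
        (greedyDigit M ρ x k : ℝ) / ρ ^ (k + 1) + greedyRem M ρ x (k + 1) / ρ ^ (k + 1)
        = greedyRem M ρ x k / ρ ^ k := by
      rw [greedyRem, greedyDigit]
      field_simp
      ring
    rw [Finset.sum_range_succ, add_assoc, hstep]
    exact ih

lemma piQ_greedyDigit (hρ : 1 < ρ) (hρM : ρ ≤ M + 1) (hx : x ∈ Icc 0 (M / (ρ - 1))) :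
    piQ ρ (greedyDigit M ρ x) = x := by
  have hρ0 : 0 < ρ := by linarith
  have hrem : Tendsto (fun k => greedyRem M ρ x k / ρ ^ k) atTop (nhds 0) := by
    have hgeom : Tendsto (fun k : ℕ => M / (ρ - 1) * (ρ⁻¹) ^ k) atTop (nhds 0) := by
      simpa using (tendsto_pow_atTop_nhds_zero_of_lt_one (by positivity)
        (inv_lt_one_of_one_lt₀ hρ)).const_mul ((M : ℝ) / (ρ - 1))
    refine squeeze_zero (fun k => div_nonneg (greedyRem_mem_Icc hρ hρM hx k).1 (by positivity))
      (fun k => ?_) hgeom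
    rw [inv_pow, ← div_eq_mul_inv]
    exact div_le_div_of_nonneg_right (greedyRem_mem_Icc hρ hρM hx k).2 (by positivity)
  have hpartial :
      Tendsto (fun k => ∑ i ∈ Finset.range k, (greedyDigit M ρ x i : ℝ) / ρ ^ (i + 1))
      atTop (nhds x) := by
    have := (tendsto_const_nhds (x := x)).sub hrem
    rw [sub_zero] at this
    exact this.congr fun k => (eq_sub_of_add_eq (eq_sum_greedyDigit_add_greedyRem hρ k).symm).symm
  exact tendsto_nhds_unique
    (summable_piQ hρ fun i => min_le_left _ _).hasSum.tendsto_sum_nat hpartial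

lemma exists_isExpansion (hρ : 1 < ρ) (hρM : ρ ≤ M + 1) (hx : x ∈ Icc 0 (M / (ρ - 1))) :
    ∃ d, IsExpansion M ρ x d :=
  ⟨greedyDigit M ρ x, fun _ => min_le_left _ _, piQ_greedyDigit hρ hρM hx⟩

end Greedy

namespace UnivSeqs

variable {M : ℕ} {ρ : ℝ} {d : ℕ → ℕ}

lemma shiftSeq_mem (hρ : 1 < ρ) (hd : d ∈ UnivSeqs M ρ) (k : ℕ) :
    shiftSeq d k ∈ UnivSeqs M ρ := by
  refine ⟨fun i => hd.1 _, fun e ⟨he, hval⟩ => ?_⟩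
  set s := spliceSeq d k e
  have hsd : ∀ i < k, d i = s i := fun i hi => by simp [s, spliceSeq, hi]
  have hs : IsExpansion M ρ (piQ ρ d) s := by
    refine ⟨spliceSeq_le hd.1 he k, ?_⟩
    have := piQ_sub_piQ_of_eqOn hρ hd.1 (spliceSeq_le hd.1 he k) hsd
    rw [shiftSeq_spliceSeq, hval, sub_self, zero_div] at this
    linarith
  calc e = shiftSeq s k := (shiftSeq_spliceSeq d k e).symm
    _ = shiftSeq d k := by rw [hd.2 s hs]

-- Otherwise `c` followed by an expansion of `y` would be a second expansion of `π_ρ d`.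
lemma head_eq_of_add_eq (hρ : 1 < ρ) (hρM : ρ ≤ M + 1) (hd : d ∈ UnivSeqs M ρ) {c : ℕ}
    (hc : c ≤ M) {y : ℝ} (hy : y ∈ Icc 0 (M / (ρ - 1)))
    (hsplit : c + y = d 0 + piQ ρ (shiftSeq d 1)) : c = d 0 := by
  obtain ⟨g, hg, hgy⟩ := exists_isExpansion hρ hρM hy
  set e := spliceSeq (fun _ => c) 1 g
  have he : ∀ i, e i ≤ M := spliceSeq_le (fun _ => hc) hg 1
  have hval : piQ ρ e = piQ ρ d := by
    rw [piQ_eq_head_add_shiftSeq hρ he, piQ_eq_head_add_shiftSeq hρ hd.1, shiftSeq_spliceSeq,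
      hgy, ← hsplit]
    simp [e, spliceSeq]
  have : e = d := hd.2 e ⟨he, hval⟩
  rw [← this]
  simp [e, spliceSeq]

lemma piQ_shiftSeq_lt_one (hρ : 1 < ρ) (hρM : ρ ≤ M + 1) (hd : d ∈ UnivSeqs M ρ)
    {n : ℕ} (hn : d n < M) : piQ ρ (shiftSeq d (n + 1)) < 1 := by
  have hu := shiftSeq_mem hρ hd n
  rw [Nat.add_comm, ← shiftSeq_shiftSeq]
  by_contra! hw
  have hle : piQ ρ (shiftSeq (shiftSeq d n) 1) ≤ M / (ρ - 1) := piQ_le hρ fun i => hu.1 _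
  have := head_eq_of_add_eq hρ hρM hu (c := d n + 1) hn (y := piQ ρ _ - 1)
    ⟨by linarith, by linarith⟩ (by push_cast; simp only [shiftSeq, zero_add]; ring)
  simp [shiftSeq] at this

lemma lt_piQ_shiftSeq (hρ : 1 < ρ) (hρM : ρ ≤ M + 1) (hd : d ∈ UnivSeqs M ρ)
    {n : ℕ} (hn : 0 < d n) : M / (ρ - 1) - 1 < piQ ρ (shiftSeq d (n + 1)) := by
  have hu := shiftSeq_mem hρ hd n
  rw [Nat.add_comm, ← shiftSeq_shiftSeq]
  by_contra! hw
  have h0 : 0 ≤ piQ ρ (shiftSeq (shiftSeq d n) 1) := piQ_nonneg_s15 (by linarith) _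
  have := head_eq_of_add_eq hρ hρM hu (c := d n - 1) ((Nat.sub_le _ _).trans (hd.1 n))
    (y := piQ ρ _ + 1) ⟨by linarith, by linarith⟩
    (by push_cast [Nat.cast_sub hn]; simp only [shiftSeq, zero_add]; ring)
  simp [shiftSeq] at this
  omega

end UnivSeqs

section Univoque

variable {M : ℕ} {p p' : ℝ} {a b : ℕ → ℕ}

lemma lt_piQ_sub_piQ_of_first_ne (hp : 1 < p) (hpp' : p < p') (hp'M : p' ≤ M + 1)
    (ha : a ∈ UnivSeqs M p) (ha1 : piQ p a = 1) (hb : b ∈ UnivSeqs M p') (hb1 : piQ p' b = 1)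
    {n : ℕ} (hab : ∀ i < n, a i = b i) (hn : a n ≠ b n) :
    (M / (p' - 1) - 1) / p' ^ (n + 1) < piQ p a - piQ p' a := by
  have hp' : 1 < p' := hp.trans hpp'
  have hpM : p ≤ M + 1 := hpp'.le.trans hp'M
  set A := piQ p' (shiftSeq a (n + 1))
  set B := piQ p' (shiftSeq b (n + 1))
  have hA0 : 0 ≤ A := piQ_nonneg_s15 (by linarith) _
  have hgap : piQ p a - piQ p' a = (b n - a n + B - A) / p' ^ (n + 1) := by
    rw [ha1, ← hb1, piQ_sub_piQ_of_eqOn hp' ha.1 hb.1 hab, piQ_shiftSeq_eq hp' ha.1,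
      piQ_shiftSeq_eq hp' hb.1, pow_succ]
    field_simp
    ring
  have hpos : 0 < piQ p a - piQ p' a := by
    obtain ⟨j, hj⟩ := exists_ne_zero_of_piQ_ne_zero (ha1.trans_ne one_ne_zero)
    exact sub_pos.mpr (piQ_lt_piQ_of_base_lt hp hpp' ha.1 hj)
  rcases lt_or_gt_of_ne hn with hlt | hgt
  · have hA1 : A < 1 := (piQ_le_piQ_of_base_le hp hpp'.le fun i => ha.1 _).trans_lt
      (UnivSeqs.piQ_shiftSeq_lt_one hp hpM ha (hlt.trans_le (hb.1 n)))
    have hB := UnivSeqs.lt_piQ_shiftSeq hp' hp'M hb (Nat.zero_lt_of_lt hlt)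
    have hdigits : (a n : ℝ) + 1 ≤ b n := by exact_mod_cast hlt
    rw [hgap]
    gcongr
    linarith
  · have hB1 : B < 1 := UnivSeqs.piQ_shiftSeq_lt_one hp' hp'M hb (hgt.trans_le (ha.1 n))
    have hdigits : (b n : ℝ) + 1 ≤ a n := by exact_mod_cast hgt
    have : (b n - a n + B - A) / p' ^ (n + 1) < 0 :=
      div_neg_of_neg_of_pos (by linarith) (by positivity)
    linarith

lemma abs_piQ_sub_piQ_le_of_univoque {q r : ℝ} (hq : 1 < q) (hqp : q ≤ p) (hpp' : p < p')
    (hp'r : p' ≤ r) (hr : r < M + 1)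
    (ha : a ∈ UnivSeqs M p) (ha1 : piQ p a = 1) (hb : b ∈ UnivSeqs M p') (hb1 : piQ p' b = 1) :
    |piQ (M + 1) a - piQ (M + 1) b| ≤ r * M / ((M / (r - 1) - 1) * (q - 1) ^ 2) * (p' - p) := by
  have hp : 1 < p := hq.trans_le hqp
  have hp' : 1 < p' := hp.trans hpp'
  have hr1 : 1 < r := hp'.trans_le hp'r
  have hμ : 0 < M / (r - 1) - 1 := by
    rw [sub_pos, one_lt_div (by linarith)]
    linarith
  have hne : a ≠ b := by
    rintro rfl
    obtain ⟨j, hj⟩ := exists_ne_zero_of_piQ_ne_zero (ha1.trans_ne one_ne_zero)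
    exact (piQ_lt_piQ_of_base_lt hp hpp' ha.1 hj).ne (hb1.trans ha1.symm)
  obtain ⟨n, hab, hn⟩ := exists_forall_lt_eq_and_ne hne
  have hfirst := lt_piQ_sub_piQ_of_first_ne hp hpp' (by linarith) ha ha1 hb hb1 hab hn
  have hbases : M / (p - 1) - M / (p' - 1) ≤ M / (q - 1) ^ 2 * (p' - p) := by
    rw [div_sub_div _ _ (by linarith) (by linarith), div_mul_eq_mul_div, sq]
    gcongr <;> linarith
  calc |piQ (M + 1) a - piQ (M + 1) b|
      ≤ M / (M + 1 - 1) / (M + 1) ^ n := abs_piQ_sub_piQ_le_of_eqOn (by linarith) ha.1 hb.1 hab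
    _ ≤ 1 / r ^ n := by
        gcongr
        rw [add_sub_cancel_right]
        exact div_self_le_one _
    _ = r / r ^ (n + 1) := by
        rw [pow_succ]
        field_simp
    _ ≤ r / (M / (r - 1) - 1) * ((M / (r - 1) - 1) / p' ^ (n + 1)) := by
        rw [mul_div, div_mul_cancel₀ r hμ.ne']
        gcongr
    _ ≤ r / (M / (r - 1) - 1) * (M / (q - 1) ^ 2 * (p' - p)) := by
        gcongr
        calc (M / (r - 1) - 1) / p' ^ (n + 1) ≤ (M / (p' - 1) - 1) / p' ^ (n + 1) := by gcongr
          _ ≤ M / (p - 1) - M / (p' - 1) := hfirst.le.trans (piQ_sub_piQ_le hp hpp'.le ha.1)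
          _ ≤ M / (q - 1) ^ 2 * (p' - p) := hbases
    _ = r * M / ((M / (r - 1) - 1) * (q - 1) ^ 2) * (p' - p) := by
        field_simp

end Univoque

def expansionOfOne (M : ℕ) (ρ : ℝ) : ℕ → ℕ := Classical.epsilon (IsExpansion M ρ 1)

section UnivBases

variable {M : ℕ} {ρ : ℝ} {a : ℕ → ℕ}

lemma expansionOfOne_eq (hρ : ρ ∈ UnivBases M) (ha : IsExpansion M ρ 1 a) :
    expansionOfOne M ρ = a :=
  hρ.2.2.unique (Classical.epsilon_spec ⟨a, ha⟩) ha

lemma mem_univSeqs_of_mem_univBases (hρ : ρ ∈ UnivBases M) (ha : IsExpansion M ρ 1 a) :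
    a ∈ UnivSeqs M ρ := by
  refine ⟨ha.1, fun e he => ?_⟩
  rw [ha.2] at he
  exact hρ.2.2.unique he ha

lemma lipschitzOnWith_piQ_expansionOfOne {q r : ℝ} (hq : 1 < q) (hr : r < M + 1) :
    LipschitzOnWith (r * M / ((M / (r - 1) - 1) * (q - 1) ^ 2)).toNNReal
      (fun ρ => piQ (M + 1) (expansionOfOne M ρ)) (UnivBases M ∩ Ioo q r) := by
  refine LipschitzOnWith.of_dist_le_mul fun u hu v hv => ?_
  wlog huv : u ≤ v generalizing u v
  · rw [dist_comm, dist_comm u]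
    exact this v hv u hu (le_of_not_ge huv)
  rcases huv.eq_or_lt with rfl | huv
  · simp
  obtain ⟨a, ha, -⟩ := hu.1.2.2
  obtain ⟨b, hb, -⟩ := hv.1.2.2
  rw [expansionOfOne_eq hu.1 ha, expansionOfOne_eq hv.1 hb, Real.dist_eq, Real.dist_eq,
    abs_of_neg (sub_neg.mpr huv), neg_sub]
  refine (abs_piQ_sub_piQ_le_of_univoque hq hu.2.1.le huv hv.2.2.le hr
    (mem_univSeqs_of_mem_univBases hu.1 ha) ha.2
    (mem_univSeqs_of_mem_univBases hv.1 hb) hb.2).trans ?_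
  exact mul_le_mul_of_nonneg_right (Real.le_coe_toNNReal _) (sub_nonneg.mpr huv.le)

end UnivBases

theorem stmt15_general (M : ℕ) (q : ℝ) (hqU : q ∈ UnivBases M)
    (r : ℝ) (hr : r ∈ Ioo q ((M : ℝ) + 1)) :
    dimH {x : ℝ | ∃ p ∈ UnivBases M ∩ Ioo q r,
        ∃ a : ℕ → ℕ, IsQuasiGreedy M p a ∧ x = piQ ((M : ℝ) + 1) a}
      ≤ dimH (UnivBases M ∩ Ioo q r) := by
  have hsub : {x : ℝ | ∃ p ∈ UnivBases M ∩ Ioo q r,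
      ∃ a : ℕ → ℕ, IsQuasiGreedy M p a ∧ x = piQ ((M : ℝ) + 1) a}
      ⊆ (fun ρ => piQ (M + 1) (expansionOfOne M ρ)) '' (UnivBases M ∩ Ioo q r) := by
    rintro x ⟨p, hp, a, ha, rfl⟩
    exact ⟨p, hp, congrArg (piQ _) (expansionOfOne_eq hp.1 ha.1)⟩
  exact (dimH_mono hsub).trans (lipschitzOnWith_piQ_expansionOfOne hqU.1 hr.2).dimH_image_le

/-- For `q ∈ U` with `q ≠ M+1` and `r ∈ (q, M+1)`:
`dim_H (U ∩ (q, r)) ≥ dim_H π_{M+1}({α(p) : p ∈ U ∩ (q, r)})`. -/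
theorem stmt15 (M : ℕ) (hM : 0 < M) (q : ℝ) (hqU : q ∈ UnivBases M)
    (hne : q ≠ (M : ℝ) + 1) (r : ℝ) (hr : r ∈ Ioo q ((M : ℝ) + 1)) :
    dimH {x : ℝ | ∃ p ∈ UnivBases M ∩ Ioo q r,
        ∃ a : ℕ → ℕ, IsQuasiGreedy M p a ∧ x = piQ ((M : ℝ) + 1) a}
      ≤ dimH (UnivBases M ∩ Ioo q r) :=
  stmt15_general M q hqU r hr
end
end
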